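/- arXiv:2407.02369 — 2 statements merged into one kernel-verified Lean document; each statement's English description precedes it below -/
import Mathlib

section
/- Suppose Q̂ : S × A → ℝ is a fixed point of the smooth Q-Bellman operator U and Q̃ : S × A → ℝ is a fixed point of the Q-Bellman operator H. Then ‖Q̂ − Q̃‖ ≤ (β / (N(1 − β))) · log|A|, where ‖·‖ is the maximum norm. -/
/-!
Log-sum-exp at inverse temperature `N` overestimates the maximum by at most `log |A| / N`, and
the maximum is 1-Lipschitz for the max norm. By the two fixed-point equations, `Q̂ - Q̃ = UQ̂ - HQ̃`
is `β` times a `p`-average of differences "log-sum-exp of `Q̂(j, ·)` minus max of `Q̃(j, ·)`", each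
bounded by `log |A| / N + ‖Q̂ - Q̃‖`. So `‖Q̂ - Q̃‖ ≤ β (log |A| / N + ‖Q̂ - Q̃‖)`, which
rearranges to the claim since `β < 1`.
-/

open Finset Real

variable {S A : Type*}

/-- Maximum norm `‖Q‖ = max_{(i,a)} |Q(i,a)|`. -/
noncomputable def maxNorm [Fintype S] [Fintype A] [Nonempty S] [Nonempty A]
    (Q : S × A → ℝ) : ℝ :=
  Finset.univ.sup' Finset.univ_nonempty fun x => |Q x|

/-- Q-Bellman operator `(HQ)(i,a) = c(i,a) + β ∑_j p(j|i,a) max_b Q(j,b)`. -/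
noncomputable def bellmanH [Fintype S] [Fintype A] [Nonempty A]
    (p c : S → A → S → ℝ) (β : ℝ) (Q : S × A → ℝ) : S × A → ℝ :=
  fun x => (∑ j, p x.1 x.2 j * c x.1 x.2 j) +
    β * ∑ j, p x.1 x.2 j * (Finset.univ.sup' Finset.univ_nonempty fun b => Q (j, b))

/-- Smooth Q-Bellman operator
`(UQ)(i,a) = c(i,a) + β ∑_j p(j|i,a) (1/N) log ∑_b e^{N Q(j,b)}`. -/
noncomputable def smoothBellmanU [Fintype S] [Fintype A] [Nonempty A]
    (p c : S → A → S → ℝ) (β N : ℝ) (Q : S × A → ℝ) : S × A → ℝ :=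
  fun x => (∑ j, p x.1 x.2 j * c x.1 x.2 j) +
    β * ∑ j, p x.1 x.2 j * ((1 / N) * Real.log (∑ b, Real.exp (N * Q (j, b))))

section Order

variable {ι α : Type*} [AddCommGroup α] [LinearOrder α] [IsOrderedAddMonoid α]

lemma Finset.sup'_sub_sup'_le {s : Finset ι} (hs : s.Nonempty) (f g : ι → α) :
    s.sup' hs f - s.sup' hs g ≤ s.sup' hs fun i => |f i - g i| := by
  rw [sub_le_iff_le_add]
  refine Finset.sup'_le hs f fun i hi => ?_
  calc f i ≤ |f i - g i| + g i := sub_le_iff_le_add.mp (le_abs_self _)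
    _ ≤ (s.sup' hs fun i => |f i - g i|) + s.sup' hs g :=
      add_le_add (Finset.le_sup' (fun i => |f i - g i|) hi) (Finset.le_sup' g hi)

lemma Finset.abs_sup'_sub_sup'_le {s : Finset ι} (hs : s.Nonempty) (f g : ι → α) :
    |s.sup' hs f - s.sup' hs g| ≤ s.sup' hs fun i => |f i - g i| := by
  refine abs_sub_le_iff.mpr ⟨Finset.sup'_sub_sup'_le hs f g, ?_⟩
  simpa only [abs_sub_comm] using Finset.sup'_sub_sup'_le hs g f

end Order

lemma abs_sum_mul_le_of_abs_le {ι : Type*} (s : Finset ι) {w f : ι → ℝ} {C : ℝ}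
    (hw0 : ∀ i ∈ s, 0 ≤ w i) (hw1 : ∑ i ∈ s, w i = 1) (hf : ∀ i ∈ s, |f i| ≤ C) :
    |∑ i ∈ s, w i * f i| ≤ C :=
  calc |∑ i ∈ s, w i * f i| ≤ ∑ i ∈ s, |w i * f i| := Finset.abs_sum_le_sum_abs _ _
    _ ≤ ∑ i ∈ s, w i * C := Finset.sum_le_sum fun i hi => by
        rw [abs_mul, abs_of_nonneg (hw0 i hi)]
        exact mul_le_mul_of_nonneg_left (hf i hi) (hw0 i hi)
    _ = C := by rw [← Finset.sum_mul, hw1, one_mul]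

section LogSumExp

variable [Fintype A] [Nonempty A]

noncomputable def logSumExp (N : ℝ) (g : A → ℝ) : ℝ :=
  (1 / N) * Real.log (∑ b, Real.exp (N * g b))

lemma sum_exp_pos (N : ℝ) (g : A → ℝ) : 0 < ∑ b, Real.exp (N * g b) :=
  Finset.sum_pos (fun _ _ => Real.exp_pos _) Finset.univ_nonempty

lemma sup'_le_logSumExp {N : ℝ} (hN : 0 < N) (g : A → ℝ) :
    Finset.univ.sup' Finset.univ_nonempty g ≤ logSumExp N g := by
  obtain ⟨b, -, hb⟩ := Finset.exists_mem_eq_sup' Finset.univ_nonempty g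
  have hexp : Real.exp (N * g b) ≤ ∑ b, Real.exp (N * g b) :=
    Finset.single_le_sum (f := fun b => Real.exp (N * g b))
      (fun _ _ => (Real.exp_pos _).le) (Finset.mem_univ b)
  have hlog : N * g b ≤ Real.log (∑ b, Real.exp (N * g b)) :=
    (Real.le_log_iff_exp_le (sum_exp_pos N g)).mpr hexp
  rw [hb, logSumExp, one_div, le_inv_mul_iff₀ hN]
  exact hlog

lemma logSumExp_le_sup'_add {N : ℝ} (hN : 0 < N) (g : A → ℝ) :
    logSumExp N g ≤
      Finset.univ.sup' Finset.univ_nonempty g + (1 / N) * Real.log (Fintype.card A) := by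
  set m := Finset.univ.sup' Finset.univ_nonempty g
  have hcard : (0 : ℝ) < Fintype.card A := by exact_mod_cast Fintype.card_pos
  have hsum : ∑ b, Real.exp (N * g b) ≤ Fintype.card A * Real.exp (N * m) :=
    calc ∑ b, Real.exp (N * g b) ≤ ∑ _b : A, Real.exp (N * m) :=
          Finset.sum_le_sum fun b _ => Real.exp_le_exp.mpr
            (mul_le_mul_of_nonneg_left (Finset.le_sup' g (Finset.mem_univ b)) hN.le)
      _ = Fintype.card A * Real.exp (N * m) := by
          rw [Finset.sum_const, Finset.card_univ, nsmul_eq_mul]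
  have hlog : Real.log (∑ b, Real.exp (N * g b)) ≤ Real.log (Fintype.card A) + N * m := by
    calc Real.log (∑ b, Real.exp (N * g b))
        ≤ Real.log (Fintype.card A * Real.exp (N * m)) :=
          Real.log_le_log (sum_exp_pos N g) hsum
      _ = Real.log (Fintype.card A) + N * m := by
          rw [Real.log_mul hcard.ne' (Real.exp_ne_zero _), Real.log_exp]
  calc logSumExp N g ≤ (1 / N) * (Real.log (Fintype.card A) + N * m) :=
        mul_le_mul_of_nonneg_left hlog (by positivity)
    _ = m + (1 / N) * Real.log (Fintype.card A) := by field_simp; ring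

end LogSumExp

section Bellman

variable [Fintype S] [Fintype A] [Nonempty A]

lemma smoothBellmanU_sub_bellmanH (p c : S → A → S → ℝ) (β N : ℝ) (Q Q' : S × A → ℝ)
    (x : S × A) :
    smoothBellmanU p c β N Q x - bellmanH p c β Q' x =
      β * ∑ j, p x.1 x.2 j * (logSumExp N (fun b => Q (j, b)) -
        Finset.univ.sup' Finset.univ_nonempty fun b => Q' (j, b)) := by
  simp only [smoothBellmanU, bellmanH, logSumExp, mul_sub, Finset.sum_sub_distrib]
  ring

variable [Nonempty S]

lemma abs_le_maxNorm (Q : S × A → ℝ) (x : S × A) : |Q x| ≤ maxNorm Q :=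
  Finset.le_sup' (fun x => |Q x|) (Finset.mem_univ x)

lemma abs_sup'_sub_sup'_le_maxNorm (Q Q' : S × A → ℝ) (j : S) :
    |(Finset.univ.sup' Finset.univ_nonempty fun b => Q (j, b)) -
      Finset.univ.sup' Finset.univ_nonempty fun b => Q' (j, b)| ≤
      maxNorm fun x => Q x - Q' x :=
  (Finset.abs_sup'_sub_sup'_le _ _ _).trans <|
    Finset.sup'_le _ _ fun b _ => abs_le_maxNorm (fun x => Q x - Q' x) (j, b)

lemma abs_smoothBellmanU_sub_bellmanH_le (p c : S → A → S → ℝ)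
    (hp0 : ∀ i a j, 0 ≤ p i a j) (hp1 : ∀ i a, ∑ j, p i a j = 1)
    {β N : ℝ} (hβ0 : 0 ≤ β) (hN : 0 < N) (Q Q' : S × A → ℝ) (x : S × A) :
    |smoothBellmanU p c β N Q x - bellmanH p c β Q' x| ≤
      β * ((1 / N) * Real.log (Fintype.card A) + maxNorm fun x => Q x - Q' x) := by
  rw [smoothBellmanU_sub_bellmanH, abs_mul, abs_of_nonneg hβ0]
  refine mul_le_mul_of_nonneg_left
    (abs_sum_mul_le_of_abs_le _ (fun j _ => hp0 x.1 x.2 j) (hp1 x.1 x.2) fun j _ => ?_) hβ0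
  have hlower := sup'_le_logSumExp hN fun b => Q (j, b)
  have hupper := logSumExp_le_sup'_add hN fun b => Q (j, b)
  have hsup := abs_le.mp (abs_sup'_sub_sup'_le_maxNorm Q Q' j)
  exact abs_le.mpr ⟨by linarith [hsup.1], by linarith [hsup.2]⟩

end Bellman

/-- If `Q̂` is the fixed point of `U` and `Q̃` the fixed point of `H`, then
`‖Q̂ − Q̃‖ ≤ (β / (N(1 − β))) log|A|`. -/
theorem smooth_fixedPoint_close [Fintype S] [Fintype A] [Nonempty S] [Nonempty A]
    (p c : S → A → S → ℝ)
    (hp0 : ∀ i a j, 0 ≤ p i a j) (hp1 : ∀ i a, ∑ j, p i a j = 1)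
    (β : ℝ) (hβ0 : 0 ≤ β) (hβ1 : β < 1)
    (N : ℝ) (hN : 0 < N)
    (Qhat Qtilde : S × A → ℝ)
    (hQhat : smoothBellmanU p c β N Qhat = Qhat)
    (hQtilde : bellmanH p c β Qtilde = Qtilde) :
    maxNorm (fun x => Qhat x - Qtilde x) ≤
      β / (N * (1 - β)) * Real.log (Fintype.card A) := by
  set M := maxNorm fun x => Qhat x - Qtilde x
  have hM : M ≤ β * ((1 / N) * Real.log (Fintype.card A) + M) :=
    Finset.sup'_le _ _ fun x _ => by
      simpa only [hQhat, hQtilde] using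
        abs_smoothBellmanU_sub_bellmanH_le p c hp0 hp1 hβ0 hN Qhat Qtilde x
  have h1β : 0 < 1 - β := sub_pos.mpr hβ1
  rw [div_mul_eq_mul_div, le_div_iff₀ (by positivity)]
  calc M * (N * (1 - β)) = N * (M * (1 - β)) := by ring
    _ ≤ N * (β * ((1 / N) * Real.log (Fintype.card A))) :=
        mul_le_mul_of_nonneg_left (by linarith) hN.le
    _ = β * Real.log (Fintype.card A) := by field_simp
end

section
/- Let L ≥ (C_max/(1 − β))(1 + β|θ_0|) and suppose ‖Q_n‖ ≤ L. Then the Q-function Q_{n+1} obtained from one two-step Q-learning update with step size α_n ∈ [0,1] and parameter θ_n with |θ_n| ≤ |θ_0| satisfies ‖Q_{n+1}‖ ≤ L (1 + α_n β² |θ_n|). -/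
open Finset Real

variable {S A : Type*}

/-- One two-step Q-learning (TSQL) update: the selected pair `sa` is updated using
rewards `c'`, `c''`, next states `j`, `k`, step size `α` and parameter `θ`;
all other entries stay unchanged. -/
noncomputable def tsqlUpdate [Fintype A] [Nonempty A] [DecidableEq S] [DecidableEq A]
    (β : ℝ) (Q : S × A → ℝ) (sa : S × A) (j k : S) (c' c'' α θ : ℝ) : S × A → ℝ :=
  fun x => if x = sa then
      (1 - α) * Q sa + α * (c' + β * (Finset.univ.sup' Finset.univ_nonempty fun b => Q (j, b))
        + β * θ * (c'' + β * (Finset.univ.sup' Finset.univ_nonempty fun e => Q (k, e))))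
    else Q x

/-! Since `|θₙ| ≤ |θ₀|`, the hypothesis on `L` gives `C (1 + β|θₙ|) ≤ (1 - β) L`, so the
two-step target `c' + β max Qₙ(j,·) + β θₙ (c'' + β max Qₙ(k,·))` is at most
`C (1 + β|θₙ|) + β L + β²|θₙ| L ≤ L (1 + β²|θₙ|)` in absolute value. The updated entry is a
convex combination of `Qₙ(sₙ,aₙ)` and this target; every other entry is unchanged. -/

theorem Finset.abs_sup'_le {ι α : Type*} [AddCommGroup α] [LinearOrder α] [IsOrderedAddMonoid α]
    {s : Finset ι} (hs : s.Nonempty) {f : ι → α} {L : α} (h : ∀ i ∈ s, |f i| ≤ L) :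
    |s.sup' hs f| ≤ L := by
  obtain ⟨i, hi⟩ := hs
  refine abs_le.2 ⟨?_, Finset.sup'_le _ _ fun b hb => (abs_le.1 (h b hb)).2⟩
  exact (abs_le.1 (h i hi)).1.trans (Finset.le_sup' f hi)

section MaxNorm

variable [Fintype S] [Fintype A] [Nonempty S] [Nonempty A]

theorem maxNorm_le_iff {Q : S × A → ℝ} {L : ℝ} : maxNorm Q ≤ L ↔ ∀ x, |Q x| ≤ L := by
  simp [maxNorm, Finset.sup'_le_iff]

theorem maxNorm_nonneg (Q : S × A → ℝ) : 0 ≤ maxNorm Q :=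
  (abs_nonneg _).trans (Finset.le_sup' (fun x => |Q x|) (Finset.mem_univ (Classical.arbitrary _)))

end MaxNorm

section Update

variable [Fintype A] [Nonempty A] [DecidableEq S] [DecidableEq A]

theorem tsqlUpdate_apply_self (β : ℝ) (Q : S × A → ℝ) (sa : S × A) (j k : S) (c' c'' α θ : ℝ) :
    tsqlUpdate β Q sa j k c' c'' α θ sa =
      (1 - α) * Q sa + α * (c' + β * (Finset.univ.sup' Finset.univ_nonempty fun b => Q (j, b))
        + β * θ * (c'' + β * (Finset.univ.sup' Finset.univ_nonempty fun e => Q (k, e)))) :=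
  if_pos rfl

theorem tsqlUpdate_apply_of_ne {β : ℝ} {Q : S × A → ℝ} {sa x : S × A} {j k : S}
    {c' c'' α θ : ℝ} (hx : x ≠ sa) : tsqlUpdate β Q sa j k c' c'' α θ x = Q x :=
  if_neg hx

end Update

theorem mul_one_add_mul_abs_le_of_div_mul_le {β C θ θ₀ L : ℝ} (hβ0 : 0 ≤ β) (hβ1 : β < 1)
    (hC : 0 ≤ C) (hθ : |θ| ≤ |θ₀|) (hL : C / (1 - β) * (1 + β * |θ₀|) ≤ L) :
    C * (1 + β * |θ|) ≤ (1 - β) * L := by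
  have h₀ : C * (1 + β * |θ₀|) ≤ (1 - β) * L := by
    rw [div_mul_eq_mul_div, div_le_iff₀ (sub_pos.2 hβ1)] at hL
    linarith
  calc C * (1 + β * |θ|) ≤ C * (1 + β * |θ₀|) := by gcongr
    _ ≤ (1 - β) * L := h₀

theorem abs_twoStepTarget_le {β C L θ c' c'' m m' : ℝ} (hβ : 0 ≤ β)
    (hc' : |c'| ≤ C) (hc'' : |c''| ≤ C) (hm : |m| ≤ L) (hm' : |m'| ≤ L)
    (hCL : C * (1 + β * |θ|) ≤ (1 - β) * L) :
    |c' + β * m + β * θ * (c'' + β * m')| ≤ L * (1 + β ^ 2 * |θ|) := by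
  have hfirst : |c' + β * m| ≤ C + β * L := by
    grw [abs_add_le, abs_mul, abs_of_nonneg hβ, hc', hm]
  have hsecond : |β * θ * (c'' + β * m')| ≤ β * |θ| * (C + β * L) := by
    grw [abs_mul, abs_mul, abs_of_nonneg hβ, abs_add_le, abs_mul, abs_of_nonneg hβ, hc'', hm']
  calc |c' + β * m + β * θ * (c'' + β * m')|
      ≤ (C + β * L) + β * |θ| * (C + β * L) := by grw [abs_add_le, hfirst, hsecond]
    _ = C * (1 + β * |θ|) + β * L + β ^ 2 * |θ| * L := by ring
    _ ≤ L * (1 + β ^ 2 * |θ|) := by linarith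

theorem abs_convexComb_le {α q t L M : ℝ} (hα0 : 0 ≤ α) (hα1 : α ≤ 1) (hq : |q| ≤ L)
    (ht : |t| ≤ M) : |(1 - α) * q + α * t| ≤ (1 - α) * L + α * M := by
  have h1α : 0 ≤ 1 - α := sub_nonneg.2 hα1
  grw [abs_add_le, abs_mul, abs_mul, abs_of_nonneg hα0, abs_of_nonneg h1α, hq, ht]

theorem tsql_inductive_step_bound_general [Fintype S] [Fintype A] [Nonempty S] [Nonempty A]
    [DecidableEq S] [DecidableEq A]
    (β Cmax : ℝ) (hβ0 : 0 ≤ β) (hβ1 : β < 1) (hC : 0 ≤ Cmax)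
    (Qn : S × A → ℝ) (sa : S × A) (j k : S) (c' c'' αn θn θ0 : ℝ)
    (hc' : |c'| ≤ Cmax) (hc'' : |c''| ≤ Cmax)
    (hα0 : 0 ≤ αn) (hα1 : αn ≤ 1) (hθ : |θn| ≤ |θ0|)
    (L : ℝ) (hL : (Cmax / (1 - β)) * (1 + β * |θ0|) ≤ L)
    (hQn : maxNorm Qn ≤ L) :
    maxNorm (tsqlUpdate β Qn sa j k c' c'' αn θn) ≤ L * (1 + αn * β ^ 2 * |θn|) := by
  have hQ := maxNorm_le_iff.1 hQn
  have hL0 : 0 ≤ L := (maxNorm_nonneg Qn).trans hQn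
  have hgrowth : L ≤ L * (1 + αn * β ^ 2 * |θn|) :=
    le_mul_of_one_le_right hL0 (le_add_of_nonneg_right (by positivity))
  have hmax (s : S) := Finset.abs_sup'_le Finset.univ_nonempty fun b _ => hQ (s, b)
  refine maxNorm_le_iff.2 fun x => ?_
  obtain rfl | hx := eq_or_ne x sa
  · rw [tsqlUpdate_apply_self]
    have htarget := abs_twoStepTarget_le hβ0 hc' hc'' (hmax j) (hmax k)
      (mul_one_add_mul_abs_le_of_div_mul_le hβ0 hβ1 hC hθ hL)
    calc _ ≤ (1 - αn) * L + αn * (L * (1 + β ^ 2 * |θn|)) :=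
          abs_convexComb_le hα0 hα1 (hQ x) htarget
      _ = L * (1 + αn * β ^ 2 * |θn|) := by ring
  · rw [tsqlUpdate_apply_of_ne hx]
    exact (hQ x).trans hgrowth

/-- If `L ≥ (C_max/(1−β))(1 + β|θ₀|)` and `‖Qₙ‖ ≤ L`, then one TSQL update gives
`‖Qₙ₊₁‖ ≤ L (1 + αₙ β² |θₙ|)`. -/
theorem tsql_inductive_step_bound [Fintype S] [Fintype A] [Nonempty S] [Nonempty A]
    [DecidableEq S] [DecidableEq A]
    (β Cmax : ℝ) (hβ0 : 0 ≤ β) (hβ1 : β < 1) (hC : 0 ≤ Cmax)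
    (Qn : S × A → ℝ) (sa : S × A) (j k : S) (c' c'' αn θn θ0 : ℝ)
    (hc' : |c'| ≤ Cmax) (hc'' : |c''| ≤ Cmax)
    (hα0 : 0 ≤ αn) (hα1 : αn ≤ 1) (hθ1 : |θn| ≤ 1) (hθ : |θn| ≤ |θ0|)
    (L : ℝ) (hL : (Cmax / (1 - β)) * (1 + β * |θ0|) ≤ L)
    (hQn : maxNorm Qn ≤ L) :
    maxNorm (tsqlUpdate β Qn sa j k c' c'' αn θn) ≤ L * (1 + αn * β ^ 2 * |θn|) :=
  tsql_inductive_step_bound_general β Cmax hβ0 hβ1 hC Qn sa j k c' c'' αn θn θ0 hc' hc'' hα0 hα1 hθ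
    L hL hQn
end
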